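/- Under the standing assumptions, fix ε_h ∈ (0,1/2] and set L₀ := 2a + 4K_H + (l+1)(2K_h + a). For 0 < λ ≤ min{1, 1/(6L₀)^{1/(1−ε_h)}}, the map f : ℝ^d → ℝ^d given by f(θ) = θ − λ h_λ(θ) is bi-Lipschitz: for all θ, θ' ∈ ℝ^d, (1 − L₀ λ^{1−ε_h})|θ − θ'| ≤ |f(θ) − f(θ')| ≤ (1 + L₀ λ^{1−ε_h})|θ − θ'|; moreover f is a bijection from ℝ^d onto ℝ^d. -/

import Mathlib

/-!
Write `g θ = λ • h_λ θ`, so that `f = id - g`. The point is that `g` is Lipschitz with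
constant `L₀ λ^(1-ε) ≤ 1/6`. Splitting `g θ - g θ'` (with `‖θ'‖ ≤ ‖θ‖`) into the linear part
`λ a (θ - θ')`, the tamed increment `λ φ(‖θ‖) ((h θ - h θ') - a (θ - θ'))` and the variation
`λ (φ(‖θ‖) - φ(‖θ'‖)) (h θ' - a θ')` of the taming factor `φ(s) = (1 + λ s^((l+1)/ε))^(-ε)`,
each term is controlled by `λ^(1-ε)` thanks to `λ φ(s) s^j ≤ λ^(1-ε)` for `0 ≤ j ≤ l + 1`;
the Hessian bound handles the second term and the mean value theorem for `φ` the third.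
Then `id - g` is bi-Lipschitz by the triangle inequality, and it is onto because
`θ ↦ y + g θ` is a contraction, whose fixed point solves `f θ = y`.
-/

open Real

noncomputable def tamingFactor (lam eps q s : ℝ) : ℝ := ((1 + lam * s ^ (q / eps)) ^ eps)⁻¹

section TamingFactor

variable {lam eps q s : ℝ}

lemma one_le_one_add_mul_rpow (hlam : 0 ≤ lam) (hs : 0 ≤ s) (r : ℝ) : 1 ≤ 1 + lam * s ^ r := by
  have := rpow_nonneg hs r
  nlinarith

lemma tamingFactor_nonneg (hlam : 0 ≤ lam) (hs : 0 ≤ s) : 0 ≤ tamingFactor lam eps q s := by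
  have := one_le_one_add_mul_rpow hlam hs (q / eps)
  unfold tamingFactor
  positivity

lemma tamingFactor_le_one (hlam : 0 ≤ lam) (heps : 0 ≤ eps) (hs : 0 ≤ s) :
    tamingFactor lam eps q s ≤ 1 :=
  inv_le_one_of_one_le₀ (one_le_rpow (one_le_one_add_mul_rpow hlam hs _) heps)

-- The exponent `q / eps` is chosen so that `(lam * s ^ (q / eps)) ^ eps = lam ^ eps * s ^ q`.
lemma rpow_mul_rpow_mul_tamingFactor_le_one (hlam : 0 ≤ lam) (heps : 0 < eps) (hs : 0 ≤ s) :
    lam ^ eps * s ^ q * tamingFactor lam eps q s ≤ 1 := by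
  have hbase := one_le_one_add_mul_rpow hlam hs (q / eps)
  have hpow : lam ^ eps * s ^ q = (lam * s ^ (q / eps)) ^ eps := by
    rw [mul_rpow hlam (rpow_nonneg hs _), ← rpow_mul hs, div_mul_cancel₀ q heps.ne']
  rw [tamingFactor, hpow, ← div_eq_mul_inv, div_le_one (by positivity)]
  exact rpow_le_rpow (by positivity) (by linarith) heps.le

lemma le_rpow_one_sub (hlam0 : 0 < lam) (hlam1 : lam ≤ 1) (heps : 0 ≤ eps) :
    lam ≤ lam ^ (1 - eps) := by
  simpa using rpow_le_rpow_of_exponent_ge hlam0 hlam1 (by linarith : 1 - eps ≤ 1)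

lemma mul_tamingFactor_mul_rpow_le {j : ℝ} (hlam0 : 0 < lam) (hlam1 : lam ≤ 1) (heps : 0 < eps)
    (hj0 : 0 ≤ j) (hjq : j ≤ q) (hs : 0 ≤ s) :
    lam * tamingFactor lam eps q s * s ^ j ≤ lam ^ (1 - eps) := by
  rcases le_total s 1 with hs1 | hs1
  · calc lam * tamingFactor lam eps q s * s ^ j ≤ lam * 1 * 1 := by
          gcongr
          exacts [tamingFactor_le_one hlam0.le heps.le hs, rpow_le_one hs hs1 hj0]
      _ ≤ lam ^ (1 - eps) := by simpa using le_rpow_one_sub hlam0 hlam1 heps.le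
  · have hφ := tamingFactor_nonneg (eps := eps) (q := q) hlam0.le hs
    calc lam * tamingFactor lam eps q s * s ^ j
        ≤ lam * tamingFactor lam eps q s * s ^ q := by
          gcongr
      _ = lam ^ (1 - eps) * (lam ^ eps * s ^ q * tamingFactor lam eps q s) := by
          rw [rpow_sub hlam0, rpow_one]
          field_simp
      _ ≤ lam ^ (1 - eps) * 1 := by
          gcongr
          exact rpow_mul_rpow_mul_tamingFactor_le_one hlam0.le heps hs
      _ = lam ^ (1 - eps) := mul_one _

lemma hasDerivAt_tamingFactor (hlam : 0 ≤ lam) (heps : 0 < eps) (hq : eps ≤ q) (hs : 0 ≤ s) :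
    HasDerivAt (tamingFactor lam eps q)
      (-(q * lam * s ^ (q / eps - 1) / (1 + lam * s ^ (q / eps)) ^ (eps + 1))) s := by
  have hr : 1 ≤ q / eps := (one_le_div heps).2 hq
  have hB : 0 < 1 + lam * s ^ (q / eps) :=
    zero_lt_one.trans_le (one_le_one_add_mul_rpow hlam hs _)
  have hinner : HasDerivAt (fun t => 1 + lam * t ^ (q / eps))
      (lam * (q / eps * s ^ (q / eps - 1))) s :=
    ((hasDerivAt_rpow_const (Or.inr hr)).const_mul lam).const_add 1
  refine ((hinner.rpow_const (p := eps) (Or.inl hB.ne')).inv (by positivity)).congr_deriv ?_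
  rw [sq, ← rpow_add hB, show eps + eps = (eps - 1) + (eps + 1) by ring, rpow_add hB]
  field_simp

lemma mul_neg_deriv_tamingFactor_mul_rpow_le {t : ℝ} (hlam0 : 0 < lam) (hlam1 : lam ≤ 1)
    (heps0 : 0 < eps) (heps1 : eps ≤ 1) (hq : 1 ≤ q) (ht0 : 0 ≤ t) (htq : t ≤ q) (hs : 0 < s) :
    lam * (q * lam * s ^ (q / eps - 1) / (1 + lam * s ^ (q / eps)) ^ (eps + 1)) * s ^ t
      ≤ q * lam ^ (1 - eps) := by
  set r := q / eps
  set B := 1 + lam * s ^ r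
  have hr : 1 ≤ r := (one_le_div heps0).2 (heps1.trans hq)
  have hB : 1 ≤ B := one_le_one_add_mul_rpow hlam0.le hs.le r
  have hq0 : 0 ≤ q := zero_le_one.trans hq
  rcases le_total s 1 with hs1 | hs1
  · have hfrac : s ^ (r - 1) / B ^ (eps + 1) ≤ 1 :=
      div_le_one_of_le₀ ((rpow_le_one hs.le hs1 (by linarith)).trans (one_le_rpow hB (by linarith)))
        (by positivity)
    calc lam * (q * lam * s ^ (r - 1) / B ^ (eps + 1)) * s ^ t
        = q * (lam * lam) * (s ^ (r - 1) / B ^ (eps + 1)) * s ^ t := by ring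
      _ ≤ q * lam * 1 * 1 := by
          gcongr
          · nlinarith
          · exact rpow_le_one hs.le hs1 ht0
      _ ≤ q * lam ^ (1 - eps) := by
          simpa using mul_le_mul_of_nonneg_left (le_rpow_one_sub hlam0 hlam1 heps0.le) hq0
  · have hw : lam * s ^ r / B ^ (eps + 1) ≤ tamingFactor lam eps q s := by
      rw [tamingFactor, rpow_add (by positivity), rpow_one, div_le_iff₀ (by positivity)]
      calc lam * s ^ r ≤ B := by linarith
        _ = (B ^ eps)⁻¹ * (B ^ eps * B) := by field_simp
    calc lam * (q * lam * s ^ (r - 1) / B ^ (eps + 1)) * s ^ t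
        = q * (lam * (lam * s ^ r / B ^ (eps + 1)) * s ^ (t - 1)) := by
          simp only [rpow_sub hs, rpow_one]
          field_simp
      _ ≤ q * (lam * tamingFactor lam eps q s * s ^ (q - 1)) := by
          have hpow : s ^ (t - 1) ≤ s ^ (q - 1) := rpow_le_rpow_of_exponent_le hs1 (by linarith)
          have hφ := tamingFactor_nonneg (eps := eps) (q := q) hlam0.le hs.le
          gcongr
      _ ≤ q * lam ^ (1 - eps) := by
          gcongr
          exact mul_tamingFactor_mul_rpow_le hlam0 hlam1 heps0 (by linarith) (by linarith) hs.le

lemma mul_abs_tamingFactor_sub_mul_rpow_le {m M t : ℝ} (hlam0 : 0 < lam) (hlam1 : lam ≤ 1)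
    (heps0 : 0 < eps) (heps1 : eps ≤ 1) (hq : 1 ≤ q) (ht0 : 0 ≤ t) (htq : t ≤ q)
    (hm : 0 ≤ m) (hmM : m ≤ M) :
    lam * |tamingFactor lam eps q M - tamingFactor lam eps q m| * m ^ t
      ≤ q * lam ^ (1 - eps) * (M - m) := by
  rcases hmM.eq_or_lt with rfl | hlt
  · simp
  set φ' := fun s => -(q * lam * s ^ (q / eps - 1) / (1 + lam * s ^ (q / eps)) ^ (eps + 1))
  have hderiv : ∀ s, 0 ≤ s → HasDerivAt (tamingFactor lam eps q) (φ' s) s := fun s hs =>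
    hasDerivAt_tamingFactor hlam0.le heps0 (heps1.trans hq) hs
  obtain ⟨ξ, hξ, hslope⟩ := exists_hasDerivAt_eq_slope (tamingFactor lam eps q) φ' hlt
    (fun s hs => (hderiv s (hm.trans hs.1)).continuousAt.continuousWithinAt)
    (fun s hs => hderiv s (hm.trans hs.1.le))
  have hξ0 : 0 < ξ := hm.trans_lt hξ.1
  have hdiff : tamingFactor lam eps q M - tamingFactor lam eps q m = φ' ξ * (M - m) := by
    rw [hslope, div_mul_cancel₀ _ (sub_ne_zero.mpr hlt.ne')]
  calc lam * |tamingFactor lam eps q M - tamingFactor lam eps q m| * m ^ t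
      = lam * |φ' ξ| * m ^ t * (M - m) := by
        rw [hdiff, abs_mul, abs_of_pos (sub_pos.mpr hlt)]; ring
    _ ≤ lam * |φ' ξ| * ξ ^ t * (M - m) := by
        gcongr
        exact hξ.1.le
    _ = lam * (q * lam * ξ ^ (q / eps - 1) / (1 + lam * ξ ^ (q / eps)) ^ (eps + 1)) * ξ ^ t
          * (M - m) := by
        rw [abs_neg, abs_of_nonneg]
        have := one_le_one_add_mul_rpow hlam0.le hξ0.le (q / eps)
        have := zero_le_one.trans hq
        positivity
    _ ≤ q * lam ^ (1 - eps) * (M - m) :=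
        mul_le_mul_of_nonneg_right
          (mul_neg_deriv_tamingFactor_mul_rpow_le hlam0 hlam1 heps0 heps1 hq ht0 htq hξ0)
          (sub_nonneg.2 hlt.le)

lemma mul_tamingFactor_mul_growth_le {K a : ℝ} {l : ℕ} (hlam0 : 0 < lam) (hlam1 : lam ≤ 1)
    (heps : 0 < eps) (hK : 0 ≤ K) (ha : 0 ≤ a) (hs : 0 ≤ s) :
    lam * tamingFactor lam eps (l + 1) s * (K * (1 + s ^ l) + a)
      ≤ lam ^ (1 - eps) * (2 * K + a) := by
  have hbound : ∀ j : ℝ, 0 ≤ j → j ≤ l + 1 →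
      lam * tamingFactor lam eps (l + 1) s * s ^ j ≤ lam ^ (1 - eps) := fun j hj0 hj =>
    mul_tamingFactor_mul_rpow_le hlam0 hlam1 heps hj0 hj hs
  have h0 := hbound 0 le_rfl (by positivity)
  have hl := hbound l (by positivity) (by linarith)
  rw [rpow_zero, mul_one] at h0
  rw [rpow_natCast] at hl
  calc lam * tamingFactor lam eps (l + 1) s * (K * (1 + s ^ l) + a)
      = K * (lam * tamingFactor lam eps (l + 1) s)
        + K * (lam * tamingFactor lam eps (l + 1) s * s ^ l)
        + a * (lam * tamingFactor lam eps (l + 1) s) := by ring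
    _ ≤ K * lam ^ (1 - eps) + K * lam ^ (1 - eps) + a * lam ^ (1 - eps) := by gcongr
    _ = lam ^ (1 - eps) * (2 * K + a) := by ring

lemma mul_abs_tamingFactor_sub_mul_growth_le {K a m M : ℝ} {l : ℕ} (hlam0 : 0 < lam)
    (hlam1 : lam ≤ 1) (heps0 : 0 < eps) (heps1 : eps ≤ 1) (hK : 0 ≤ K) (ha : 0 ≤ a)
    (hm : 0 ≤ m) (hmM : m ≤ M) :
    lam * |tamingFactor lam eps (l + 1) M - tamingFactor lam eps (l + 1) m|
        * (K * (1 + m ^ (l + 1)) + a * m)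
      ≤ lam ^ (1 - eps) * ((l + 1) * (2 * K + a)) * (M - m) := by
  set Δ := lam * |tamingFactor lam eps (l + 1) M - tamingFactor lam eps (l + 1) m|
  have hbound : ∀ t : ℝ, 0 ≤ t → t ≤ l + 1 → Δ * m ^ t ≤ (l + 1) * lam ^ (1 - eps) * (M - m) :=
    fun t ht0 ht => mul_abs_tamingFactor_sub_mul_rpow_le hlam0 hlam1 heps0 heps1
      (by linarith [l.cast_nonneg (α := ℝ)]) ht0 ht hm hmM
  have h0 := hbound 0 le_rfl (by positivity)
  have h1 := hbound 1 zero_le_one (by linarith [l.cast_nonneg (α := ℝ)])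
  have hl := hbound ((l + 1 : ℕ) : ℝ) (by positivity) (by push_cast; rfl)
  rw [rpow_zero, mul_one] at h0
  rw [rpow_one] at h1
  rw [rpow_natCast] at hl
  calc Δ * (K * (1 + m ^ (l + 1)) + a * m) = K * Δ + K * (Δ * m ^ (l + 1)) + a * (Δ * m) := by
        ring
    _ ≤ K * ((l + 1) * lam ^ (1 - eps) * (M - m)) + K * ((l + 1) * lam ^ (1 - eps) * (M - m))
        + a * ((l + 1) * lam ^ (1 - eps) * (M - m)) := by gcongr
    _ = lam ^ (1 - eps) * ((l + 1) * (2 * K + a)) * (M - m) := by ring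

end TamingFactor

section TamedDrift

variable {E : Type*} [NormedAddCommGroup E] [NormedSpace ℝ E]

noncomputable def tamedDrift (a q lam eps : ℝ) (h : E → E) (θ : E) : E :=
  a • θ + tamingFactor lam eps q ‖θ‖ • (h θ - a • θ)

variable {h : E → E} {K_H K_h a lam eps : ℝ} {l : ℕ}

lemma norm_smul_tamedDrift_sub_le_of_norm_le
    (hh_lip : ∀ θ θ' : E, ‖θ'‖ ≤ ‖θ‖ → ‖h θ - h θ'‖ ≤ K_H * (1 + ‖θ‖ ^ l) * ‖θ - θ'‖)
    (hh_bd : ∀ θ, ‖h θ‖ ≤ K_h * (1 + ‖θ‖ ^ (l + 1)))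
    (hK_H : 0 ≤ K_H) (hK_h : 0 ≤ K_h) (ha : 0 ≤ a) (hlam0 : 0 < lam) (hlam1 : lam ≤ 1)
    (heps0 : 0 < eps) (heps1 : eps ≤ 1) {θ θ' : E} (hθ : ‖θ'‖ ≤ ‖θ‖) :
    ‖lam • tamedDrift a (l + 1) lam eps h θ - lam • tamedDrift a (l + 1) lam eps h θ'‖
      ≤ lam ^ (1 - eps) * (2 * a + 2 * K_H + (l + 1) * (2 * K_h + a)) * ‖θ - θ'‖ := by
  set φ := tamingFactor lam eps (l + 1) ‖θ‖
  set φ' := tamingFactor lam eps (l + 1) ‖θ'‖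
  have hφ : 0 ≤ φ := tamingFactor_nonneg hlam0.le (norm_nonneg θ)
  have hdecomp : lam • tamedDrift a (l + 1) lam eps h θ - lam • tamedDrift a (l + 1) lam eps h θ'
      = (lam * a) • (θ - θ') + (lam * φ) • ((h θ - h θ') - a • (θ - θ'))
        + (lam * (φ - φ')) • (h θ' - a • θ') := by
    simp only [tamedDrift, φ, φ']
    module
  have hlinear : ‖(lam * a) • (θ - θ')‖ ≤ lam ^ (1 - eps) * a * ‖θ - θ'‖ := by
    rw [norm_smul, Real.norm_of_nonneg (by positivity)]
    gcongr
    exact le_rpow_one_sub hlam0 hlam1 heps0.le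
  have hmiddle : ‖(lam * φ) • ((h θ - h θ') - a • (θ - θ'))‖
      ≤ lam ^ (1 - eps) * (2 * K_H + a) * ‖θ - θ'‖ := by
    rw [norm_smul, Real.norm_of_nonneg (by positivity)]
    calc lam * φ * ‖(h θ - h θ') - a • (θ - θ')‖
        ≤ lam * φ * ((K_H * (1 + ‖θ‖ ^ l) + a) * ‖θ - θ'‖) := by
          gcongr
          refine (norm_sub_le _ _).trans ?_
          rw [norm_smul, Real.norm_of_nonneg ha, add_mul]
          gcongr
          exact hh_lip θ θ' hθ
      _ ≤ lam ^ (1 - eps) * (2 * K_H + a) * ‖θ - θ'‖ := by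
          rw [← mul_assoc]
          exact mul_le_mul_of_nonneg_right
            (mul_tamingFactor_mul_growth_le hlam0 hlam1 heps0 hK_H ha (norm_nonneg θ))
            (norm_nonneg _)
  have htaming : ‖(lam * (φ - φ')) • (h θ' - a • θ')‖
      ≤ lam ^ (1 - eps) * ((l + 1) * (2 * K_h + a)) * ‖θ - θ'‖ := by
    rw [norm_smul, Real.norm_eq_abs, abs_mul, abs_of_pos hlam0]
    calc lam * |φ - φ'| * ‖h θ' - a • θ'‖
        ≤ lam * |φ - φ'| * (K_h * (1 + ‖θ'‖ ^ (l + 1)) + a * ‖θ'‖) := by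
          gcongr
          refine (norm_sub_le _ _).trans ?_
          rw [norm_smul, Real.norm_of_nonneg ha]
          gcongr
          exact hh_bd θ'
      _ ≤ lam ^ (1 - eps) * ((l + 1) * (2 * K_h + a)) * (‖θ‖ - ‖θ'‖) :=
          mul_abs_tamingFactor_sub_mul_growth_le hlam0 hlam1 heps0 heps1 hK_h ha
            (norm_nonneg θ') hθ
      _ ≤ lam ^ (1 - eps) * ((l + 1) * (2 * K_h + a)) * ‖θ - θ'‖ := by
          gcongr
          exact norm_sub_norm_le θ θ'
  rw [hdecomp]
  refine (norm_add₃_le ..).trans ?_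
  linarith

lemma norm_smul_tamedDrift_sub_le
    (hh_lip : ∀ θ θ' : E, ‖θ'‖ ≤ ‖θ‖ → ‖h θ - h θ'‖ ≤ K_H * (1 + ‖θ‖ ^ l) * ‖θ - θ'‖)
    (hh_bd : ∀ θ, ‖h θ‖ ≤ K_h * (1 + ‖θ‖ ^ (l + 1)))
    (hK_H : 0 ≤ K_H) (hK_h : 0 ≤ K_h) (ha : 0 ≤ a) (hlam0 : 0 < lam) (hlam1 : lam ≤ 1)
    (heps0 : 0 < eps) (heps1 : eps ≤ 1) (θ θ' : E) :
    ‖lam • tamedDrift a (l + 1) lam eps h θ - lam • tamedDrift a (l + 1) lam eps h θ'‖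
      ≤ lam ^ (1 - eps) * (2 * a + 2 * K_H + (l + 1) * (2 * K_h + a)) * ‖θ - θ'‖ := by
  rcases le_total ‖θ'‖ ‖θ‖ with hθ | hθ
  · exact norm_smul_tamedDrift_sub_le_of_norm_le hh_lip hh_bd hK_H hK_h ha hlam0 hlam1 heps0
      heps1 hθ
  · rw [norm_sub_rev, norm_sub_rev θ]
    exact norm_smul_tamedDrift_sub_le_of_norm_le hh_lip hh_bd hK_H hK_h ha hlam0 hlam1 heps0
      heps1 hθ

end TamedDrift

section PerturbationOfIdentity

variable {E : Type*} [NormedAddCommGroup E] {K : NNReal} {g : E → E}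

lemma LipschitzWith.norm_sub_sub_sub_le (hg : LipschitzWith K g) (x y : E) :
    ‖(x - g x) - (y - g y)‖ ≤ (1 + K) * ‖x - y‖ := by
  rw [sub_sub_sub_comm]
  linarith [_root_.norm_sub_le (x - y) (g x - g y), hg.norm_sub_le x y]

lemma LipschitzWith.mul_norm_sub_le_norm_sub_sub_sub (hg : LipschitzWith K g) (x y : E) :
    (1 - K) * ‖x - y‖ ≤ ‖(x - g x) - (y - g y)‖ := by
  rw [sub_sub_sub_comm]
  linarith [_root_.norm_sub_norm_le (x - y) (g x - g y), hg.norm_sub_le x y]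

lemma ContractingWith.bijective_id_sub [CompleteSpace E] (hg : ContractingWith K g) :
    Function.Bijective fun x => x - g x := by
  refine ⟨fun x y hxy => ?_, fun y => ?_⟩
  · have hle := hg.2.mul_norm_sub_le_norm_sub_sub_sub x y
    rw [show x - g x = y - g y from hxy, sub_self, norm_zero] at hle
    have hK : (0 : ℝ) < 1 - K := hg.one_sub_K_pos
    exact sub_eq_zero.mp (norm_le_zero_iff.mp (nonpos_of_mul_nonpos_right hle hK))
  · have hT : ContractingWith K fun x => y + g x :=
      ⟨hg.1, LipschitzWith.of_dist_le_mul fun x x' => by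
        simpa only [dist_add_left] using hg.2.dist_le_mul x x'⟩
    refine ⟨ContractingWith.fixedPoint _ hT, ?_⟩
    exact sub_eq_iff_eq_add.2 hT.fixedPoint_isFixedPt.symm

end PerturbationOfIdentity

lemma differentiable_gradient {F : Type*} [NormedAddCommGroup F] [InnerProductSpace ℝ F]
    [CompleteSpace F] {u : F → ℝ} {n : WithTop ℕ∞} (hu : ContDiff ℝ n u) (hn : 2 ≤ n) :
    Differentiable ℝ (gradient u) :=
  (InnerProductSpace.toDual ℝ F).symm.differentiable.comp
    ((hu.fderiv_right (m := 1) hn).differentiable one_ne_zero)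

lemma norm_sub_le_of_norm_fderiv_le {E F : Type*} [NormedAddCommGroup E] [NormedSpace ℝ E]
    [NormedAddCommGroup F] [NormedSpace ℝ F] {f : E → F} {C : ℝ} {l : ℕ}
    (hf : Differentiable ℝ f) (hC : 0 ≤ C) (hbd : ∀ x, ‖fderiv ℝ f x‖ ≤ C * (1 + ‖x‖ ^ l))
    {x y : E} (hxy : ‖y‖ ≤ ‖x‖) :
    ‖f x - f y‖ ≤ C * (1 + ‖x‖ ^ l) * ‖x - y‖ := by
  refine Convex.norm_image_sub_le_of_norm_fderiv_le (fun z _ => hf z) (fun z hz => ?_)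
    (convex_closedBall 0 ‖x‖) (by simpa using hxy) (by simp)
  refine (hbd z).trans ?_
  gcongr
  simpa using hz

lemma mul_rpow_one_sub_le_of_le_rpow {c L₀ lam eps : ℝ} (hc : 0 < c) (hL₀ : 0 < L₀)
    (hlam : 0 ≤ lam) (heps : eps < 1) (hle : lam ≤ (1 / (c * L₀)) ^ (1 / (1 - eps))) :
    L₀ * lam ^ (1 - eps) ≤ 1 / c := by
  rw [one_div (1 - eps), le_rpow_inv_iff_of_pos hlam (by positivity) (by linarith)] at hle
  calc L₀ * lam ^ (1 - eps) ≤ L₀ * (1 / (c * L₀)) := by gcongr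
    _ = 1 / c := by field_simp

theorem kTULA_drift_map_biLipschitz_bijective_general
    {d : ℕ}
    (u : EuclideanSpace ℝ (Fin d) → ℝ) (hu : ContDiff ℝ 3 u)
    (h : EuclideanSpace ℝ (Fin d) → EuclideanSpace ℝ (Fin d))
    (H : EuclideanSpace ℝ (Fin d) →
      EuclideanSpace ℝ (Fin d) →L[ℝ] EuclideanSpace ℝ (Fin d))
    (hgrad : ∀ θ, h θ = gradient u θ)
    (hHess : ∀ θ, H θ = fderiv ℝ (gradient u) θ)
    (L K_H K_h a : ℝ)
    (hK_H : 0 < K_H) (hK_h : 0 < K_h) (ha : 0 < a)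
    (l : ℕ)
    (hH_bd : ∀ θ : EuclideanSpace ℝ (Fin d), ‖H θ‖ ≤ K_H * (1 + ‖θ‖ ^ l))
    (hh_bd : ∀ θ : EuclideanSpace ℝ (Fin d), ‖h θ‖ ≤ K_h * (1 + ‖θ‖ ^ (l + 1)))
    (hlam : ℝ → ℝ → EuclideanSpace ℝ (Fin d) → EuclideanSpace ℝ (Fin d))
    (hlam_def : ∀ (lam eps : ℝ) (θ : EuclideanSpace ℝ (Fin d)),
      hlam lam eps θ =
        a • θ + ((1 + lam * ‖θ‖ ^ (((l : ℝ) + 1) / eps)) ^ eps)⁻¹ • (h θ - a • θ)) :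
    ∀ (lam eps L₀ : ℝ),
      0 < eps → eps ≤ 1 / 2 →
      L₀ = 2 * a + 4 * K_H + ((l : ℝ) + 1) * (2 * K_h + a) →
      0 < lam → lam ≤ min 1 ((1 / (6 * L₀)) ^ ((1 : ℝ) / (1 - eps))) →
      (∀ θ θ' : EuclideanSpace ℝ (Fin d),
        (1 - L₀ * lam ^ ((1 : ℝ) - eps)) * ‖θ - θ'‖ ≤
            ‖(θ - lam • hlam lam eps θ) - (θ' - lam • hlam lam eps θ')‖ ∧
          ‖(θ - lam • hlam lam eps θ) - (θ' - lam • hlam lam eps θ')‖ ≤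
            (1 + L₀ * lam ^ ((1 : ℝ) - eps)) * ‖θ - θ'‖) ∧
      Function.Bijective (fun θ : EuclideanSpace ℝ (Fin d) => θ - lam • hlam lam eps θ) := by
  intro lam eps L₀ heps0 heps1 hL₀ hlam0 hlam_le
  obtain rfl : h = gradient u := funext hgrad
  obtain rfl : H = fderiv ℝ (gradient u) := funext hHess
  have hdrift : hlam lam eps = tamedDrift a ((l : ℝ) + 1) lam eps (gradient u) :=
    funext (hlam_def lam eps)
  have hh_lip θ θ' (hθ : ‖θ'‖ ≤ ‖θ‖) :=
    norm_sub_le_of_norm_fderiv_le (differentiable_gradient hu (by norm_num)) hK_H.le hH_bd hθ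
  have hlam1 : lam ≤ 1 := hlam_le.trans (min_le_left _ _)
  have hL₀pos : 0 < L₀ := by rw [hL₀]; positivity
  have hK_le : L₀ * lam ^ (1 - eps) ≤ 1 / 6 := mul_rpow_one_sub_le_of_le_rpow (by norm_num)
    hL₀pos hlam0.le (by linarith) (hlam_le.trans (min_le_right _ _))
  set K : NNReal := ⟨L₀ * lam ^ (1 - eps), by positivity⟩
  have hKcoe : (K : ℝ) = L₀ * lam ^ (1 - eps) := rfl
  have hg : ContractingWith K fun θ => lam • hlam lam eps θ := by
    refine ⟨by rw [← NNReal.coe_lt_coe, hKcoe, NNReal.coe_one]; linarith,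
      LipschitzWith.of_dist_le_mul fun θ θ' => ?_⟩
    rw [dist_eq_norm, dist_eq_norm, hdrift, hKcoe, mul_comm L₀]
    refine (norm_smul_tamedDrift_sub_le hh_lip hh_bd hK_H.le hK_h.le ha.le hlam0 hlam1 heps0
      (by linarith) θ θ').trans ?_
    gcongr
    linarith
  exact ⟨fun θ θ' => ⟨hg.2.mul_norm_sub_le_norm_sub_sub_sub θ θ', hg.2.norm_sub_sub_sub_le θ θ'⟩,
    hg.bijective_id_sub⟩

theorem kTULA_drift_map_biLipschitz_bijective
    {d : ℕ} (hd : 0 < d)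
    (u : EuclideanSpace ℝ (Fin d) → ℝ) (hu : ContDiff ℝ 3 u)
    (h : EuclideanSpace ℝ (Fin d) → EuclideanSpace ℝ (Fin d))
    (H : EuclideanSpace ℝ (Fin d) →
      EuclideanSpace ℝ (Fin d) →L[ℝ] EuclideanSpace ℝ (Fin d))
    (hgrad : ∀ θ, h θ = gradient u θ)
    (hHess : ∀ θ, H θ = fderiv ℝ (gradient u) θ)
    (L K_H K_h a b : ℝ)
    (hL : 0 < L) (hK_H : 0 < K_H) (hK_h : 0 < K_h) (ha : 0 < a) (hb : 0 < b)
    (l : ℕ) (hl : 1 ≤ l)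
    (hH_lip : ∀ θ θ' : EuclideanSpace ℝ (Fin d),
      ‖H θ - H θ'‖ ≤ L * (1 + ‖θ‖ + ‖θ'‖) ^ (l - 1) * ‖θ - θ'‖)
    (hH_bd : ∀ θ : EuclideanSpace ℝ (Fin d), ‖H θ‖ ≤ K_H * (1 + ‖θ‖ ^ l))
    (hh_bd : ∀ θ : EuclideanSpace ℝ (Fin d), ‖h θ‖ ≤ K_h * (1 + ‖θ‖ ^ (l + 1)))
    (hdiss : ∀ θ : EuclideanSpace ℝ (Fin d), a * ‖θ‖ ^ 2 - b ≤ (inner ℝ (h θ) θ : ℝ))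
    (hlam : ℝ → ℝ → EuclideanSpace ℝ (Fin d) → EuclideanSpace ℝ (Fin d))
    (hlam_def : ∀ (lam eps : ℝ) (θ : EuclideanSpace ℝ (Fin d)),
      hlam lam eps θ =
        a • θ + ((1 + lam * ‖θ‖ ^ (((l : ℝ) + 1) / eps)) ^ eps)⁻¹ • (h θ - a • θ)) :
    ∀ (lam eps L₀ : ℝ),
      0 < eps → eps ≤ 1 / 2 →
      L₀ = 2 * a + 4 * K_H + ((l : ℝ) + 1) * (2 * K_h + a) →
      0 < lam → lam ≤ min 1 ((1 / (6 * L₀)) ^ ((1 : ℝ) / (1 - eps))) →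
      (∀ θ θ' : EuclideanSpace ℝ (Fin d),
        (1 - L₀ * lam ^ ((1 : ℝ) - eps)) * ‖θ - θ'‖ ≤
            ‖(θ - lam • hlam lam eps θ) - (θ' - lam • hlam lam eps θ')‖ ∧
          ‖(θ - lam • hlam lam eps θ) - (θ' - lam • hlam lam eps θ')‖ ≤
            (1 + L₀ * lam ^ ((1 : ℝ) - eps)) * ‖θ - θ'‖) ∧
      Function.Bijective (fun θ : EuclideanSpace ℝ (Fin d) => θ - lam • hlam lam eps θ) :=
  kTULA_drift_map_biLipschitz_bijective_general u hu h H hgrad hHess L K_H K_h a hK_H hK_h ha l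
    hH_bd hh_bd hlam hlam_def
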